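/- Let π be a disjunctive logic program and let M be a stable model of π. Then for every atom p ∈ Atoms(π): p ∈ M if and only if M̄ ∪ π ⊢ p. -/

import Mathlib

namespace DLP

/-- Formulas of the language ℒ: disjunctions of atoms `p₁ ∨ … ∨ p_n`,
negated atoms `∼p`, and program rules
`q₁,…,q_m, ∼r₁,…,∼r_k → p₁ ∨ … ∨ p_n`. -/
inductive Formula (α : Type*) where
  | disj : List α → Formula α
  | neg  : α → Formula α
  | rule : List α → List α → List α → Formula α

/-- A program rule: positive body atoms, negated body atoms, and head disjuncts. -/
structure Rule (α : Type*) where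
  pos : List α
  neg : List α
  head : List α

/-- The ℒ-formula corresponding to a rule. -/
def Rule.toFormula {α : Type*} (r : Rule α) : Formula α :=
  Formula.rule r.pos r.neg r.head

/-- The set of ℒ-formulas corresponding to a program. -/
def formulas {α : Type*} (π : Set (Rule α)) : Set (Formula α) :=
  Rule.toFormula '' π

/-- `Atoms(π)`: the atoms occurring in the program π. -/
def atoms {α : Type*} (π : Set (Rule α)) : Set α :=
  {p | ∃ r ∈ π, p ∈ r.pos ∨ p ∈ r.neg ∨ p ∈ r.head}

/-- `∼Atoms(π)`. -/
def negAtoms {α : Type*} (π : Set (Rule α)) : Set (Formula α) :=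
  Formula.neg '' atoms π

/-- Satisfaction of an ℒ-formula by a set of atoms `M`. -/
def satisfies {α : Type*} (M : Set α) : Formula α → Prop
  | Formula.disj l => ∃ p ∈ l, p ∈ M
  | Formula.neg p => p ∉ M
  | Formula.rule pb nb hd =>
      ((∀ p ∈ pb, p ∈ M) ∧ (∀ q ∈ nb, q ∉ M)) → ∃ p ∈ hd, p ∈ M

/-- `M` is a model of the program π. -/
def isModel {α : Type*} (M : Set α) (π : Set (Rule α)) : Prop :=
  ∀ r ∈ π, satisfies M r.toFormula

/-- The Gelfond–Lifschitz reduct `π^S`. -/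
def reduct {α : Type*} (π : Set (Rule α)) (S : Set α) : Set (Rule α) :=
  {r' | ∃ r ∈ π, (∀ x ∈ r.neg, x ∉ S) ∧ r' = ⟨r.pos, [], r.head⟩}

/-- `M` is a (two-valued) stable model of π: a ⊆-minimal model of `π^M`. -/
def stableModel {α : Type*} (π : Set (Rule α)) (M : Set α) : Prop :=
  M ⊆ atoms π ∧ isModel M (reduct π M) ∧
    ∀ N : Set α, N ⊂ M → ¬ isModel N (reduct π M)

/-- The consequence relation `Δ ⊢ φ`, generated by membership and the rules
[MP], [Res] and [RBC].  Note that `Δ ⊢ p` for an atom `p` is rendered as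
`Derives Δ (Formula.disj [p])`, and the premise `→ φᵢ` used in [RBC] is the
rule with empty body and head `φᵢ`. -/
inductive Derives {α : Type*} : Set (Formula α) → Formula α → Prop
  | mem {Δ : Set (Formula α)} {φ : Formula α} :
      φ ∈ Δ → Derives Δ φ
  | mp {Δ : Set (Formula α)} {pb nb hd : List α} :
      Derives Δ (Formula.rule pb nb hd) →
      (∀ p ∈ pb, Derives Δ (Formula.disj [p])) →
      (∀ q ∈ nb, Derives Δ (Formula.neg q)) →
      Derives Δ (Formula.disj hd)
  | res {Δ : Set (Formula α)} {L₁ Φ L₂ : List α} :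
      Derives Δ (Formula.disj (L₁ ++ Φ ++ L₂)) →
      (∀ q ∈ Φ, Derives Δ (Formula.neg q)) →
      Derives Δ (Formula.disj (L₁ ++ L₂))
  | rbc {Δ : Set (Formula α)} {Φ hd : List α} :
      Derives Δ (Formula.disj Φ) →
      (∀ q ∈ Φ, Derives (Δ ∪ {Formula.rule [] [] [q]}) (Formula.disj hd)) →
      Derives Δ (Formula.disj hd)

/-- `M̄ = {∼p : p ∈ Atoms(π) \ M}`. -/
def barSet {α : Type*} (π : Set (Rule α)) (M : Set α) : Set (Formula α) :=
  Formula.neg '' (atoms π \ M)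

/-- `⌊Δ⌋ = {p : ∼p ∈ Δ}`. -/
def floorSet {α : Type*} (Δ : Set (Formula α)) : Set α :=
  {p | Formula.neg p ∈ Δ}

/-- `Δ̲ = Atoms(π) \ ⌊Δ⌋`. -/
def underline {α : Type*} (π : Set (Rule α)) (Δ : Set (Formula α)) : Set α :=
  atoms π \ floorSet Δ

/-- In `ABF(π)`, a set of assumptions `Δ` attacks the assumption `∼p`
iff `π ∪ Δ ⊢ p`. -/
def attacks {α : Type*} (π : Set (Rule α)) (Δ : Set (Formula α)) (p : α) : Prop :=
  Derives (formulas π ∪ Δ) (Formula.disj [p])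

/-- `Δ` is conflict-free in `ABF(π)`: no subset of `Δ` attacks a member of `Δ`. -/
def conflictFree {α : Type*} (π : Set (Rule α)) (Δ : Set (Formula α)) : Prop :=
  ¬ ∃ Δ' ⊆ Δ, ∃ p : α, Formula.neg p ∈ Δ ∧ attacks π Δ' p

/-- `Δ` is a stable extension of `ABF(π)`: `Δ ⊆ ∼Atoms(π)` is conflict-free and
attacks every assumption in `∼Atoms(π) \ Δ`. -/
def stableExtension {α : Type*} (π : Set (Rule α)) (Δ : Set (Formula α)) : Prop :=
  Δ ⊆ negAtoms π ∧ conflictFree π Δ ∧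
    ∀ p ∈ atoms π, Formula.neg p ∉ Δ → attacks π Δ p

/-- Weakening for the consequence relation. -/
lemma derives_weaken {α : Type*} {Δ Δ' : Set (Formula α)} {φ : Formula α}
    (h : Derives Δ φ) (hs : Δ ⊆ Δ') : Derives Δ' φ := by
  induction h generalizing Δ' with
  | mem hm => exact .mem (hs hm)
  | mp _ _ _ ihr ihp ihn =>
      exact .mp (ihr hs) (fun p hp => ihp p hp hs) (fun q hq => ihn q hq hs)
  | res _ _ ihr ihn => exact .res (ihr hs) (fun q hq => ihn q hq hs)
  | rbc _ _ ihr ihq =>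
      exact .rbc (ihr hs) (fun q hq => ihq q hq (Set.union_subset_union_left _ hs))

/-- Soundness of the consequence relation. -/
lemma derives_sound {α : Type*} (M : Set α) :
    ∀ {Δ : Set (Formula α)} {φ : Formula α}, Derives Δ φ →
      (∀ ψ ∈ Δ, satisfies M ψ) → satisfies M φ := by
  intro Δ φ h
  induction h with
  | mem hm => exact fun hΔ => hΔ _ hm
  | mp _ _ _ ihr ihp ihn =>
      intro hΔ
      have hr := ihr hΔ
      simp only [satisfies] at hr ⊢
      refine hr ⟨fun p hp => ?_, fun q hq => ?_⟩
      · have := ihp p hp hΔ; simp only [satisfies] at this; simpa using this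
      · exact ihn q hq hΔ
  | res _ _ ihr ihn =>
      intro hΔ
      have hr := ihr hΔ
      simp only [satisfies, List.mem_append] at hr ⊢
      obtain ⟨p, hp, hpM⟩ := hr
      rcases hp with (hp | hp) | hp
      · exact ⟨p, Or.inl hp, hpM⟩
      · exact absurd hpM (ihn p hp hΔ)
      · exact ⟨p, Or.inr hp, hpM⟩
  | rbc _ _ ihr ihq =>
      intro hΔ
      have hr := ihr hΔ
      simp only [satisfies] at hr
      obtain ⟨q, hq, hqM⟩ := hr
      refine ihq q hq ?_
      intro ψ hψ
      rcases hψ with hψ | hψ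
      · exact hΔ ψ hψ
      · rcases hψ with rfl
        exact fun _ => ⟨q, by simp, hqM⟩

/-- From a derivable disjunction one may remove (via [Res]) all atoms
outside `M`, provided their negations are derivable. -/
lemma derives_filter {α : Type*} (M : Set α) {Δ : Set (Formula α)} :
    ∀ n (L : List α), L.length ≤ n → Derives Δ (Formula.disj L) →
      (∀ q ∈ L, q ∉ M → Derives Δ (Formula.neg q)) →
      ∃ L' : List α, (∀ q ∈ L', q ∈ L ∧ q ∈ M) ∧ (∀ q ∈ L, q ∈ M → q ∈ L') ∧
        Derives Δ (Formula.disj L') := by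
  intro n
  induction n with
  | zero =>
      intro L hL hD _
      have : L = [] := List.length_eq_zero_iff.mp (Nat.le_zero.mp hL)
      subst this
      exact ⟨[], by simp, by simp, hD⟩
  | succ n ih =>
      intro L hL hD hneg
      by_cases hall : ∀ q ∈ L, q ∈ M
      · exact ⟨L, fun q hq => ⟨hq, hall q hq⟩, fun q hq _ => hq, hD⟩
      · push_neg at hall
        obtain ⟨q, hqL, hqM⟩ := hall
        obtain ⟨L₁, L₂, rfl⟩ := List.append_of_mem hqL
        have heq : L₁ ++ [q] ++ L₂ = L₁ ++ q :: L₂ := by simp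
        have hD' : Derives Δ (Formula.disj (L₁ ++ L₂)) := by
          refine Derives.res (Φ := [q]) (heq ▸ hD) ?_
          intro x hx
          simp only [List.mem_singleton] at hx
          rw [hx]
          exact hneg q hqL hqM
        have hlen : (L₁ ++ L₂).length ≤ n := by
          have := hL
          simp only [List.length_append, List.length_cons] at this ⊢
          omega
        have hmem : ∀ x ∈ L₁ ++ L₂, x ∈ L₁ ++ q :: L₂ := by
          intro x hx
          simp only [List.mem_append, List.mem_cons] at hx ⊢
          tauto
        obtain ⟨L', h1, h2, h3⟩ := ih (L₁ ++ L₂) hlen hD'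
          (fun x hx hxM => hneg x (hmem x hx) hxM)
        refine ⟨L', fun x hx => ⟨hmem x ((h1 x hx).1), (h1 x hx).2⟩, ?_, h3⟩
        intro x hx hxM
        refine h2 x ?_ hxM
        simp only [List.mem_append, List.mem_cons] at hx ⊢
        rcases hx with hx | (rfl | hx)
        · exact Or.inl hx
        · exact absurd hxM hqM
        · exact Or.inr hx

/-- `Atoms(π)` is finite for a finite program π. -/
lemma atoms_finite {α : Type*} {π : Set (Rule α)} (h : π.Finite) :
    (atoms π).Finite := by
  have hsub : atoms π ⊆ ⋃ r ∈ π,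
      ({x | x ∈ r.pos} ∪ ({x | x ∈ r.neg} ∪ {x | x ∈ r.head})) := by
    intro p hp
    obtain ⟨r, hr, hp⟩ := hp
    exact Set.mem_biUnion hr (by simpa using hp)
  refine Set.Finite.subset (Set.Finite.biUnion h fun r _ => ?_) hsub
  exact (r.pos.finite_toSet.union (r.neg.finite_toSet.union r.head.finite_toSet))

/-- Key completeness lemma: if `M` is a stable model of π, then every atom of
`M` is derivable from π together with `M̄` (and possibly extra assumptions). -/
lemma derives_key {α : Type*} (π : Set (Rule α)) (M : Set α) (hM : M.Finite)
    (hred : isModel M (reduct π M))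
    (hmin : ∀ N : Set α, N ⊂ M → ¬ isModel N (reduct π M))
    (hMat : M ⊆ atoms π) :
    ∀ n (Δ : Set (Formula α)), formulas π ∪ barSet π M ⊆ Δ →
      (M \ {p | p ∈ M ∧ Derives Δ (Formula.disj [p])}).ncard ≤ n →
      ∀ p ∈ M, Derives Δ (Formula.disj [p]) := by
  intro n
  induction n with
  | zero =>
      intro Δ hΔ hcard p hp
      set D : Set α := {p | p ∈ M ∧ Derives Δ (Formula.disj [p])} with hDdef
      have hfin : (M \ D).Finite := hM.diff
      have : M \ D = ∅ := by
        rw [← Set.ncard_eq_zero hfin] at *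
        omega
      have hpD : p ∈ D := by
        by_contra hc
        exact absurd (Set.mem_diff_of_mem hp hc) (by rw [this]; simp)
      exact hpD.2
  | succ n ih =>
      intro Δ hΔ hcard p hp
      set D : Set α := {p | p ∈ M ∧ Derives Δ (Formula.disj [p])} with hDdef
      by_cases hpD : p ∈ D
      · exact hpD.2
      -- D is a proper subset of M
      have hDM : D ⊂ M := by
        constructor
        · intro x hx; exact hx.1
        · intro hc
          exact hpD (hc hp)
      have hnm := hmin D hDM
      rw [isModel] at hnm
      push_neg at hnm
      obtain ⟨r, hr, hnsat⟩ := hnm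
      obtain ⟨r₀, hr₀, hnegM, rfl⟩ := hr
      simp only [Rule.toFormula, satisfies] at hnsat
      push_neg at hnsat
      obtain ⟨⟨hposD, -⟩, hheadD⟩ := hnsat
      -- derive the head of the rule from Δ
      have hruleΔ : Derives Δ (Formula.rule r₀.pos r₀.neg r₀.head) :=
        Derives.mem (hΔ (Or.inl ⟨r₀, hr₀, rfl⟩))
      have hbar : ∀ q, q ∈ atoms π → q ∉ M → Derives Δ (Formula.neg q) := by
        intro q hq hqM
        exact Derives.mem (hΔ (Or.inr ⟨q, ⟨hq, hqM⟩, rfl⟩))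
      have hhead : Derives Δ (Formula.disj r₀.head) := by
        refine Derives.mp hruleΔ (fun p hp => (hposD p hp).2) ?_
        intro q hq
        exact hbar q ⟨r₀, hr₀, Or.inr (Or.inl hq)⟩ (hnegM q hq)
      -- filter the head down to atoms of M
      obtain ⟨L', hL1, hL2, hL3⟩ := derives_filter M r₀.head.length r₀.head
        le_rfl hhead
        (fun q hq hqM => hbar q ⟨r₀, hr₀, Or.inr (Or.inr hq)⟩ hqM)
      -- L' is nonempty and disjoint from D
      have hMsat := hred _ ⟨r₀, hr₀, hnegM, rfl⟩
      rw [Rule.toFormula] at hMsat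
      simp only [satisfies] at hMsat
      have hex : ∃ a ∈ r₀.head, a ∈ M :=
        hMsat ⟨fun x hx => (hposD x hx).1, by simp⟩
      obtain ⟨a₀, ha₀h, ha₀M⟩ := hex
      have hL'ne : L' ≠ [] := by
        intro hc
        have := hL2 a₀ ha₀h ha₀M
        rw [hc] at this
        simp at this
      -- for each a ∈ L', derive p from Δ ∪ {→ a} using the IH
      have hstep : ∀ a ∈ L',
          Derives (Δ ∪ {Formula.rule [] [] [a]}) (Formula.disj [p]) := by
        intro a haL'
        obtain ⟨haH, haM⟩ := hL1 a haL'
        have haD : a ∉ D := fun hc => hheadD a haH hc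
        set Δ' : Set (Formula α) := Δ ∪ {Formula.rule [] [] [a]} with hΔ'def
        set D' : Set α := {p | p ∈ M ∧ Derives Δ' (Formula.disj [p])} with hD'def
        have hsub : Δ ⊆ Δ' := Set.subset_union_left
        have hDsub : D ⊆ D' := fun x hx => ⟨hx.1, derives_weaken hx.2 hsub⟩
        have haD' : a ∈ D' := by
          refine ⟨haM, ?_⟩
          exact Derives.mp (Derives.mem (Or.inr rfl)) (by simp) (by simp)
        have hdiff : M \ D' ⊆ (M \ D) \ {a} := by
          intro x hx
          refine ⟨⟨hx.1, fun hc => hx.2 (hDsub hc)⟩, ?_⟩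
          intro hc
          simp only [Set.mem_singleton_iff] at hc
          exact hx.2 (hc ▸ haD')
        have haMD : a ∈ M \ D := ⟨haM, haD⟩
        have hcard' : (M \ D').ncard ≤ n := by
          have h1 : (M \ D').ncard ≤ ((M \ D) \ {a}).ncard :=
            Set.ncard_le_ncard hdiff (hM.diff.diff)
          have h2 : ((M \ D) \ {a}).ncard < (M \ D).ncard :=
            Set.ncard_diff_singleton_lt_of_mem haMD hM.diff
          omega
        exact ih Δ' (hΔ.trans hsub) hcard' p hp
      exact Derives.rbc hL3 hstep

/-- for a stable model `M` of π and any `p ∈ Atoms(π)`,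
`p ∈ M` iff `M̄ ∪ π ⊢ p`. -/
theorem stmt9 {α : Type*} (π : Set (Rule α)) (hfin : π.Finite)
    (M : Set α) (hst : stableModel π M) :
    ∀ p ∈ atoms π,
      (p ∈ M ↔ Derives (formulas π ∪ barSet π M) (Formula.disj [p])) := by
  obtain ⟨hMat, hred, hmin⟩ := hst
  have hMfin : M.Finite := (atoms_finite hfin).subset hMat
  intro p hp
  constructor
  · intro hpM
    exact derives_key π M hMfin hred hmin hMat
      (M \ {q | q ∈ M ∧ Derives (formulas π ∪ barSet π M) (Formula.disj [q])}).ncard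
      _ le_rfl le_rfl p hpM
  · intro hder
    have hsat : satisfies M (Formula.disj [p]) := by
      refine derives_sound M hder ?_
      intro ψ hψ
      rcases hψ with hψ | hψ
      · obtain ⟨r, hr, rfl⟩ := hψ
        rw [Rule.toFormula]
        intro ⟨hpos, hneg⟩
        have := hred _ ⟨r, hr, hneg, rfl⟩
        rw [Rule.toFormula] at this
        exact this ⟨hpos, by simp⟩
      · obtain ⟨q, ⟨-, hqM⟩, rfl⟩ := hψ
        exact hqM
    simpa [satisfies] using hsat

end DLP
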